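/- Let c_7 > 0 and A > 0 be real numbers with A ≤ c_7 · Z. Suppose X, Y are complex numbers with Z := max(|X|, |Y|) > 0, that ∏_{j=1}^n |β_j| ≤ c_0 · Z^k, that i is an index (1 ≤ i ≤ n) with |β_i| = min_{1≤j≤n} |β_j|, and that A ≥ c_7 · c_{4i}. Then |β_i| ≤ c_{5i} · c_7^{n−1−k} · A^{k−n+1}. (This is the conclusion of Lemma 2 of the paper, with the constants corrected so that the implication A ≥ c_7 c_{4i} ⇒ Z ≥ c_{4i} holds.) -/

import Mathlib

/-!
Since `β i` is the smallest of the `β j`, the product bound gives `‖β i‖ ≤ c₀^(1/n) Z^(k/n)`.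
For `j ≠ i`, eliminating `Y` or `X` from `β i` and `β j` (according as `Z = ‖Y‖` or `Z = ‖X‖`)
gives `c₁ Z ≤ ‖β j‖ + c₃ + max 1 (‖α j‖/‖α i‖) ‖β i‖`; once `Z ≥ c₄` the last two terms are at
most `(1 - ε) c₁ Z / 2` and `ε c₁ Z / 2`, so `‖β j‖ ≥ c₁ Z / 2`. Feeding this back into the
product bound yields `‖β i‖ ≤ c₅ Z^(k-n+1)`, and `Z ≥ A / c₇` with a nonpositive exponent
finishes.
-/

open Finset

namespace Finset

variable {ι R : Type*} [CommMonoidWithZero R] [Preorder R] [ZeroLEOneClass R] [PosMulMono R]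
  [DecidableEq ι]

theorem mul_prod_erase_le_prod {s : Finset ι} {i : ι} (hi : i ∈ s) {f g : ι → R}
    (hfi : 0 ≤ f i) (hg : ∀ j ∈ s.erase i, 0 ≤ g j) (hgf : ∀ j ∈ s.erase i, g j ≤ f j) :
    f i * ∏ j ∈ s.erase i, g j ≤ ∏ j ∈ s, f j := by
  rw [← mul_prod_erase s f hi]
  exact mul_le_mul_of_nonneg_left (prod_le_prod hg hgf) hfi

end Finset

section LinearForms

variable {𝕜 : Type*} [NormedField 𝕜]

theorem norm_sub_mul_norm_right_le (a a' l l' X Y : 𝕜) :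
    ‖a' - a‖ * ‖Y‖ ≤ ‖X - a' * Y + l'‖ + ‖X - a * Y + l‖ + ‖l' - l‖ := by
  have h : (a - a') * Y = (X - a' * Y + l' - (X - a * Y + l)) - (l' - l) := by ring
  calc ‖a' - a‖ * ‖Y‖ = ‖(a - a') * Y‖ := by rw [norm_mul, norm_sub_rev]
    _ ≤ ‖X - a' * Y + l' - (X - a * Y + l)‖ + ‖l' - l‖ := h ▸ norm_sub_le _ _
    _ ≤ ‖X - a' * Y + l'‖ + ‖X - a * Y + l‖ + ‖l' - l‖ := by
      gcongr; exact norm_sub_le _ _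

theorem norm_sub_mul_norm_left_le (a a' l l' X Y : 𝕜) :
    ‖a' - a‖ * ‖X‖ ≤ ‖a‖ * ‖X - a' * Y + l'‖ + ‖a'‖ * ‖X - a * Y + l‖ + ‖a * l' - a' * l‖ := by
  have h : (a - a') * X
      = (a * (X - a' * Y + l') - a' * (X - a * Y + l)) - (a * l' - a' * l) := by ring
  calc ‖a' - a‖ * ‖X‖ = ‖(a - a') * X‖ := by rw [norm_mul, norm_sub_rev]
    _ ≤ ‖a * (X - a' * Y + l') - a' * (X - a * Y + l)‖ + ‖a * l' - a' * l‖ :=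
      h ▸ norm_sub_le _ _
    _ ≤ ‖a‖ * ‖X - a' * Y + l'‖ + ‖a'‖ * ‖X - a * Y + l‖ + ‖a * l' - a' * l‖ := by
      gcongr; simpa only [norm_mul] using norm_sub_le (a * _) (a' * _)

theorem norm_sub_mul_min_mul_max_le {a : 𝕜} (ha : a ≠ 0) (a' l l' X Y : 𝕜) :
    ‖a' - a‖ * min 1 (1 / ‖a‖) * max ‖X‖ ‖Y‖
      ≤ ‖X - a' * Y + l'‖ + max ‖l' - l‖ (‖a * l' - a' * l‖ / ‖a‖)
        + max 1 (‖a'‖ / ‖a‖) * ‖X - a * Y + l‖ := by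
  rcases le_total ‖X‖ ‖Y‖ with hXY | hYX
  · rw [max_eq_right hXY]
    calc ‖a' - a‖ * min 1 (1 / ‖a‖) * ‖Y‖ ≤ ‖a' - a‖ * 1 * ‖Y‖ := by
          gcongr; exact min_le_left (1 : ℝ) _
      _ ≤ ‖X - a' * Y + l'‖ + ‖X - a * Y + l‖ + ‖l' - l‖ := by
        simpa only [mul_one] using norm_sub_mul_norm_right_le a a' l l' X Y
      _ ≤ _ := by
        have := le_max_left ‖l' - l‖ (‖a * l' - a' * l‖ / ‖a‖)
        have := mul_le_mul_of_nonneg_right (le_max_left (1 : ℝ) (‖a'‖ / ‖a‖))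
          (norm_nonneg (X - a * Y + l))
        linarith
  · rw [max_eq_left hYX]
    calc ‖a' - a‖ * min 1 (1 / ‖a‖) * ‖X‖ ≤ ‖a' - a‖ * (1 / ‖a‖) * ‖X‖ := by
          gcongr; exact min_le_right (1 : ℝ) _
      _ ≤ (‖a‖ * ‖X - a' * Y + l'‖ + ‖a'‖ * ‖X - a * Y + l‖ + ‖a * l' - a' * l‖) / ‖a‖ := by
        rw [mul_one_div, div_mul_eq_mul_div]
        gcongr; exact norm_sub_mul_norm_left_le a a' l l' X Y
      _ = ‖X - a' * Y + l'‖ + ‖a * l' - a' * l‖ / ‖a‖ + ‖a'‖ / ‖a‖ * ‖X - a * Y + l‖ := by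
        field_simp; ring
      _ ≤ _ := by gcongr <;> exact le_max_right _ _

end LinearForms

section RealInequalities

open Real

theorem le_rpow_mul_rpow_of_pow_le_mul_pow {x c Z : ℝ} {n k : ℕ} (hx : 0 ≤ x) (hc : 0 ≤ c)
    (hZ : 0 ≤ Z) (hn : n ≠ 0) (h : x ^ n ≤ c * Z ^ k) :
    x ≤ c ^ ((1 : ℝ) / n) * Z ^ ((k : ℝ) / n) := by
  rw [div_eq_mul_one_div (k : ℝ), rpow_mul hZ, rpow_natCast, ← mul_rpow hc (by positivity),
    one_div, le_rpow_inv_iff_of_pos hx (by positivity) (by positivity), rpow_natCast]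
  exact h

theorem mul_rpow_le_of_rpow_le {C Z p : ℝ} (hC : 0 ≤ C) (hZ : 0 < Z) (hp : 0 < p)
    (h : C ^ p ≤ Z) : C * Z ^ (1 - p⁻¹) ≤ Z := by
  calc C * Z ^ (1 - p⁻¹) ≤ Z ^ p⁻¹ * Z ^ (1 - p⁻¹) := by
        gcongr; exact (le_rpow_inv_iff_of_pos hC hZ.le hp).2 h
    _ = Z := by rw [← rpow_add hZ, add_sub_cancel, rpow_one]

theorem half_mul_le_of_max_rpow_le {c₁ c₂ c₃ ε p Z b : ℝ} (hc₁ : 0 < c₁) (hc₂ : 0 ≤ c₂)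
    (hε0 : 0 < ε) (hε1 : ε < 1) (hp : 0 < p) (hZ : 0 < Z)
    (hmax : max ((2 * c₂ / (ε * c₁)) ^ p) (2 * c₃ / ((1 - ε) * c₁)) ≤ Z)
    (h : c₁ * Z ≤ b + c₃ + c₂ * Z ^ (1 - p⁻¹)) :
    c₁ * Z / 2 ≤ b := by
  have h₂ := mul_rpow_le_of_rpow_le (by positivity) hZ hp ((le_max_left _ _).trans hmax)
  have h₃ := (le_max_right _ _).trans hmax
  rw [div_mul_eq_mul_div, div_le_iff₀ (by positivity)] at h₂
  rw [div_le_iff₀ (by nlinarith)] at h₃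
  linarith

theorem le_mul_rpow_of_mul_mul_half_pow_le {b P c Z : ℝ} {n k : ℕ} (hn : 1 ≤ n) (hP : 0 < P)
    (hZ : 0 < Z) (h : b * (P * (Z / 2) ^ (n - 1)) ≤ c * Z ^ k) :
    b ≤ 2 ^ (n - 1) * c / P * Z ^ ((k : ℝ) - n + 1) := by
  have hexp : (k : ℝ) - n + 1 = k - (n - 1 : ℕ) := by push_cast [hn]; ring
  rw [hexp, rpow_sub hZ, rpow_natCast, rpow_natCast]
  calc b ≤ c * Z ^ k / (P * (Z / 2) ^ (n - 1)) := (le_div_iff₀ (by positivity)).2 h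
    _ = 2 ^ (n - 1) * c / P * (Z ^ k / Z ^ (n - 1)) := by field_simp; rw [div_pow]; field_simp

theorem rpow_le_pow_mul_rpow_of_le_mul {A c Z : ℝ} {n k : ℕ} (hk : k < n) (hA : 0 < A)
    (hc : 0 < c) (hAZ : A ≤ c * Z) :
    Z ^ ((k : ℝ) - n + 1) ≤ c ^ (n - 1 - k) * A ^ ((k : ℝ) - n + 1) := by
  have hexp : ((n - 1 - k : ℕ) : ℝ) = -((k : ℝ) - n + 1) := by
    rw [Nat.cast_sub (by omega), Nat.cast_sub (by omega)]; push_cast; ring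
  calc Z ^ ((k : ℝ) - n + 1) ≤ (A / c) ^ ((k : ℝ) - n + 1) :=
        rpow_le_rpow_of_nonpos (by positivity) ((div_le_iff₀' hc).2 hAZ)
          (by linarith [show (k : ℝ) + 1 ≤ n by exact_mod_cast hk])
    _ = c ^ (n - 1 - k) * A ^ ((k : ℝ) - n + 1) := by
      rw [div_rpow hA.le hc.le, ← rpow_natCast, hexp, rpow_neg hc.le]; ring

end RealInequalities

/-- Lemma 2 of the paper (with corrected constants): if `A ≤ c₇ Z` and `A ≥ c₇ c₄ᵢ`
then `|βᵢ| ≤ c₅ᵢ · c₇^(n-1-k) · A^(k-n+1)`. -/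
theorem stmt6 (n k : ℕ) (hn : 2 ≤ n) (hk : k < n)
    (α lam : Fin n → ℂ) (hα0 : ∀ j, α j ≠ 0) (hαinj : Function.Injective α)
    (c0 : ℝ) (hc0 : 0 < c0)
    (c7 A : ℝ) (hc7 : 0 < c7) (hA : 0 < A)
    (X Y : ℂ) (Z : ℝ) (hZ : Z = max (‖X‖) (‖Y‖)) (hZpos : 0 < Z)
    (hAZ : A ≤ c7 * Z)
    (β : Fin n → ℂ) (hβ : ∀ j, β j = X - α j * Y + lam j)
    (hprod : ∏ j, ‖β j‖ ≤ c0 * Z ^ k)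
    (i : Fin n)
    (hmin : ‖β i‖
      = (univ : Finset (Fin n)).inf' ⟨i, mem_univ i⟩ (fun j => ‖β j‖))
    (ε : ℝ) (hε0 : 0 < ε) (hε1 : ε < 1)
    (c1 c2 c3 : Fin n → ℝ)
    (hc1 : ∀ j, c1 j = ‖α j - α i‖ * min 1 (1 / ‖α i‖))
    (hc2 : ∀ j, c2 j = c0 ^ ((1 : ℝ) / n) * max 1 (‖α j‖ / ‖α i‖))
    (hc3 : ∀ j, c3 j = max (‖lam j - lam i‖)
      (‖α i * lam j - α j * lam i‖ / ‖α i‖))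
    (hA4 : c7 * ((univ.erase i).sup'
        (by
          refine Finset.card_pos.mp ?_
          rw [Finset.card_erase_of_mem (Finset.mem_univ i), Finset.card_univ, Fintype.card_fin]
          omega)
        (fun j => max ((2 * c2 j / (ε * c1 j)) ^ ((n : ℝ) / ((n : ℝ) - (k : ℝ))))
          (2 * c3 j / ((1 - ε) * c1 j)))) ≤ A) :
    ‖β i‖
      ≤ (2 ^ (n - 1) * c0 / ∏ j ∈ univ.erase i, c1 j) * c7 ^ (n - 1 - k)
          * A ^ ((k : ℝ) - (n : ℝ) + 1) := by
  have hβi_le : ∀ j, ‖β i‖ ≤ ‖β j‖ := fun j => hmin ▸ inf'_le _ (mem_univ j)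
  have hβi : ‖β i‖ ≤ c0 ^ ((1 : ℝ) / n) * Z ^ ((k : ℝ) / n) := by
    refine le_rpow_mul_rpow_of_pow_le_mul_pow (norm_nonneg _) hc0.le hZpos.le (by omega) ?_
    refine le_trans ?_ hprod
    simpa using prod_le_prod (s := univ) (fun _ _ => norm_nonneg (β i)) fun j _ => hβi_le j
  have hc1_pos : ∀ j ∈ univ.erase i, 0 < c1 j := fun j hj => hc1 j ▸
    mul_pos (norm_pos_iff.2 (sub_ne_zero.2 (hαinj.ne (ne_of_mem_erase hj))))
      (lt_min one_pos (by simpa using hα0 i))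
  have hp : 0 < (n : ℝ) / (n - k) := div_pos (by positivity) (by simpa using hk)
  have hexp : 1 - ((n : ℝ) / (n - k))⁻¹ = k / n := by
    field_simp [show (n : ℝ) - k ≠ 0 by simpa [sub_eq_zero] using hk.ne']; ring
  have hβj : ∀ j ∈ univ.erase i, c1 j * Z / 2 ≤ ‖β j‖ := by
    intro j hj
    refine half_mul_le_of_max_rpow_le (hc1_pos j hj) (hc2 j ▸ by positivity) hε0 hε1 hp hZpos
      ((le_sup' _ hj).trans (le_of_mul_le_mul_left (hA4.trans hAZ) hc7)) ?_
    have hgeom := norm_sub_mul_min_mul_max_le (hα0 i) (α j) (lam i) (lam j) X Y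
    rw [← hβ, ← hβ, ← hc1, ← hc3, ← hZ] at hgeom
    have hmβi : max 1 (‖α j‖ / ‖α i‖) * ‖β i‖ ≤ c2 j * Z ^ ((k : ℝ) / n) := by
      rw [hc2, mul_comm (c0 ^ _), mul_assoc]
      exact mul_le_mul_of_nonneg_left hβi (zero_le_one.trans (le_max_left _ _))
    rw [hexp]; linarith
  have hprod_lower : ‖β i‖ * ((∏ j ∈ univ.erase i, c1 j) * (Z / 2) ^ (n - 1)) ≤ c0 * Z ^ k := by
    calc ‖β i‖ * ((∏ j ∈ univ.erase i, c1 j) * (Z / 2) ^ (n - 1))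
        = ‖β i‖ * ∏ j ∈ univ.erase i, c1 j * (Z / 2) := by
          rw [prod_mul_distrib, prod_const, card_erase_of_mem (mem_univ i), card_univ,
            Fintype.card_fin]
      _ ≤ ∏ j, ‖β j‖ := mul_prod_erase_le_prod (f := fun j => ‖β j‖) (mem_univ i) (norm_nonneg _)
          (fun j hj => (mul_pos (hc1_pos j hj) (half_pos hZpos)).le)
          fun j hj => by linarith [hβj j hj]
      _ ≤ c0 * Z ^ k := hprod
  calc ‖β i‖ ≤ 2 ^ (n - 1) * c0 / (∏ j ∈ univ.erase i, c1 j) * Z ^ ((k : ℝ) - n + 1) :=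
        le_mul_rpow_of_mul_mul_half_pow_le (by omega) (prod_pos hc1_pos) hZpos hprod_lower
    _ ≤ _ := by
      rw [mul_assoc]
      exact mul_le_mul_of_nonneg_left (rpow_le_pow_mul_rpow_of_le_mul hk hA hc7 hAZ)
        (div_nonneg (by positivity) (prod_pos hc1_pos).le)
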